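/- If a qubit channel E acts on Bloch vectors as n⃗ ↦ λn⃗ + b⃗ with |λ| < 1 and there is an isometry M with Tr_X[M ρ M†] = Tr_X[M E(ρ) M†] for all states ρ, then Tr_X[M |n̂⟩⟨n̂| M†] is the same for all unit Bloch vectors n̂; consequently such an M cannot exist when b⃗ ≠ 0. -/

import Mathlib

open Matrix
open scoped ComplexOrder

noncomputable section

/-- Partial trace over the first (A) factor. -/
def ptA {dA dB : ℕ} (M : Matrix (Fin dA × Fin dB) (Fin dA × Fin dB) ℂ) :
    Matrix (Fin dB) (Fin dB) ℂ :=
  fun i j => ∑ k, M (k, i) (k, j)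

/-- Partial trace over the second (B) factor. -/
def ptB {dA dB : ℕ} (M : Matrix (Fin dA × Fin dB) (Fin dA × Fin dB) ℂ) :
    Matrix (Fin dA) (Fin dA) ℂ :=
  fun i j => ∑ k, M (i, k) (j, k)

def σx : Matrix (Fin 2) (Fin 2) ℂ := !![0, 1; 1, 0]
def σy : Matrix (Fin 2) (Fin 2) ℂ := !![0, -Complex.I; Complex.I, 0]
def σz : Matrix (Fin 2) (Fin 2) ℂ := !![1, 0; 0, -1]

/-- `n⃗ · σ⃗` for a real Bloch vector `n⃗`. -/
def pv (n : Fin 3 → ℝ) : Matrix (Fin 2) (Fin 2) ℂ := n 0 • σx + n 1 • σy + n 2 • σz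

/-- The Choi matrix of a linear map on `n × n` matrices. -/
def choi {n : ℕ} (E : Matrix (Fin n) (Fin n) ℂ →ₗ[ℂ] Matrix (Fin n) (Fin n) ℂ) :
    Matrix (Fin n × Fin n) (Fin n × Fin n) ℂ :=
  fun p q => (E (Matrix.single p.1 q.1 1)) p.2 q.2

/-- Completely positive and trace preserving. -/
def IsCPTP {n : ℕ} (E : Matrix (Fin n) (Fin n) ℂ →ₗ[ℂ] Matrix (Fin n) (Fin n) ℂ) : Prop :=
  (choi E).PosSemidef ∧ ∀ ρ, (E ρ).trace = ρ.trace

/-! ### Auxiliary lemmas -/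

lemma ptA_add {dA dB : ℕ} (A B : Matrix (Fin dA × Fin dB) (Fin dA × Fin dB) ℂ) :
    ptA (A + B) = ptA A + ptA B := by
  ext i j; simp [ptA, Finset.sum_add_distrib]

lemma ptA_smul {dA dB : ℕ} {α : Type*} [Monoid α] [DistribMulAction α ℂ] (c : α)
    (A : Matrix (Fin dA × Fin dB) (Fin dA × Fin dB) ℂ) :
    ptA (c • A) = c • ptA A := by
  ext i j; simp [ptA, Finset.smul_sum]

lemma ptA_neg {dA dB : ℕ} (A : Matrix (Fin dA × Fin dB) (Fin dA × Fin dB) ℂ) :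
    ptA (-A) = -ptA A := by
  ext i j; simp [ptA, Finset.sum_neg_distrib]

lemma ptB_add {dA dB : ℕ} (A B : Matrix (Fin dA × Fin dB) (Fin dA × Fin dB) ℂ) :
    ptB (A + B) = ptB A + ptB B := by
  ext i j; simp [ptB, Finset.sum_add_distrib]

lemma ptB_smul {dA dB : ℕ} {α : Type*} [Monoid α] [DistribMulAction α ℂ] (c : α)
    (A : Matrix (Fin dA × Fin dB) (Fin dA × Fin dB) ℂ) :
    ptB (c • A) = c • ptB A := by
  ext i j; simp [ptB, Finset.smul_sum]

lemma ptB_neg {dA dB : ℕ} (A : Matrix (Fin dA × Fin dB) (Fin dA × Fin dB) ℂ) :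
    ptB (-A) = -ptB A := by
  ext i j; simp [ptB, Finset.sum_neg_distrib]

lemma pv_add (n m : Fin 3 → ℝ) : pv (n + m) = pv n + pv m := by
  simp only [pv, Pi.add_apply, add_smul]; abel

lemma pv_rsmul (c : ℝ) (n : Fin 3 → ℝ) : pv (c • n) = c • pv n := by
  simp only [pv, Pi.smul_apply, smul_eq_mul, mul_smul, smul_add]

lemma pv_neg (n : Fin 3 → ℝ) : pv (-n) = -(pv n) := by
  simp only [pv, Pi.neg_apply, neg_smul]; abel

lemma pv_trace (n : Fin 3 → ℝ) : (pv n).trace = 0 := by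
  simp [pv, σx, σy, σz, Matrix.trace_fin_two_of, Matrix.trace_add, Matrix.trace_smul]

lemma rho_trace (n : Fin 3 → ℝ) :
    ((1 / 2 : ℝ) • ((1 : Matrix (Fin 2) (Fin 2) ℂ) + pv n)).trace = 1 := by
  rw [Matrix.trace_smul, Matrix.trace_add, pv_trace, Matrix.trace_one]
  norm_num [Complex.real_smul]

lemma outerPSD (a b : ℂ) :
    (!![star a * a, star a * b; star b * a, star b * b]).PosSemidef := by
  have h := Matrix.posSemidef_conjTranspose_mul_self (!![a, b] : Matrix (Fin 1) (Fin 2) ℂ)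
  have e : (!![a, b] : Matrix (Fin 1) (Fin 2) ℂ)ᴴ * !![a, b] =
      !![star a * a, star a * b; star b * a, star b * b] := by
    ext i j
    fin_cases i <;> fin_cases j <;>
      simp [Matrix.mul_apply, Matrix.conjTranspose_apply, Fin.sum_univ_one]
  rwa [e] at h

lemma psd_helper (a b : ℂ) (A : Matrix (Fin 2) (Fin 2) ℂ)
    (h : A = !![star a * a, star a * b; star b * a, star b * b]) : A.PosSemidef :=
  h ▸ outerPSD a b

lemma rr : ((Real.sqrt 2)⁻¹ : ℂ) * ((Real.sqrt 2)⁻¹ : ℂ) = 1 / 2 := by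
  have : Real.sqrt 2 * Real.sqrt 2 = 2 := Real.mul_self_sqrt (by norm_num)
  rw [← mul_inv]
  norm_cast
  rw [this]
  norm_num

lemma pv_x : pv ![1, 0, 0] = σx := by simp [pv]
lemma pv_mx : pv ![-1, 0, 0] = -σx := by simp [pv]
lemma pv_y : pv ![0, 1, 0] = σy := by simp [pv]
lemma pv_my : pv ![0, -1, 0] = -σy := by simp [pv]
lemma pv_z : pv ![0, 0, 1] = σz := by simp [pv]
lemma pv_mz : pv ![0, 0, -1] = -σz := by simp [pv]

lemma psd_x : ((1 / 2 : ℝ) • ((1 : Matrix (Fin 2) (Fin 2) ℂ) + pv ![1, 0, 0])).PosSemidef := by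
  apply psd_helper ((Real.sqrt 2)⁻¹ : ℂ) ((Real.sqrt 2)⁻¹ : ℂ)
  rw [pv_x]
  ext i j
  fin_cases i <;> fin_cases j <;>
    simp [σx, Matrix.one_apply, Complex.real_smul, rr]

lemma psd_mx : ((1 / 2 : ℝ) • ((1 : Matrix (Fin 2) (Fin 2) ℂ) + pv ![-1, 0, 0])).PosSemidef := by
  apply psd_helper ((Real.sqrt 2)⁻¹ : ℂ) (-((Real.sqrt 2)⁻¹ : ℂ))
  rw [pv_mx]
  ext i j
  fin_cases i <;> fin_cases j <;>
    simp [σx, Matrix.one_apply, Complex.real_smul, rr]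

lemma psd_y : ((1 / 2 : ℝ) • ((1 : Matrix (Fin 2) (Fin 2) ℂ) + pv ![0, 1, 0])).PosSemidef := by
  apply psd_helper ((Real.sqrt 2)⁻¹ : ℂ) (-Complex.I * ((Real.sqrt 2)⁻¹ : ℂ))
  rw [pv_y]
  ext i j
  fin_cases i <;> fin_cases j <;>
    simp [σy, Matrix.one_apply, Complex.real_smul] <;> ring_nf <;>
    simp [Complex.ext_iff, rr] <;> ring_nf <;>
    norm_num [rr, Complex.ext_iff, ← Complex.ofReal_pow, Real.sq_sqrt]

lemma psd_my : ((1 / 2 : ℝ) • ((1 : Matrix (Fin 2) (Fin 2) ℂ) + pv ![0, -1, 0])).PosSemidef := by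
  apply psd_helper ((Real.sqrt 2)⁻¹ : ℂ) (Complex.I * ((Real.sqrt 2)⁻¹ : ℂ))
  rw [pv_my]
  ext i j
  fin_cases i <;> fin_cases j <;>
    simp [σy, Matrix.one_apply, Complex.real_smul] <;> ring_nf <;>
    simp [Complex.ext_iff, rr] <;> ring_nf <;>
    norm_num [rr, Complex.ext_iff, ← Complex.ofReal_pow, Real.sq_sqrt]

lemma psd_z : ((1 / 2 : ℝ) • ((1 : Matrix (Fin 2) (Fin 2) ℂ) + pv ![0, 0, 1])).PosSemidef := by
  apply psd_helper (1 : ℂ) (0 : ℂ)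
  rw [pv_z]
  ext i j
  fin_cases i <;> fin_cases j <;>
    simp [σz, Matrix.one_apply, Complex.real_smul] <;> norm_num

lemma psd_mz : ((1 / 2 : ℝ) • ((1 : Matrix (Fin 2) (Fin 2) ℂ) + pv ![0, 0, -1])).PosSemidef := by
  apply psd_helper (0 : ℂ) (1 : ℂ)
  rw [pv_mz]
  ext i j
  fin_cases i <;> fin_cases j <;>
    simp [σz, Matrix.one_apply, Complex.real_smul] <;> norm_num

lemma cancel_lemma (L a c : ℂ) (hL : L ≠ 1) (e1 : a = L * a + c) (e2 : -a = -(L * a) + c) :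
    a = 0 := by
  have hc : a * (1 - L) = 0 := by linear_combination (1 / 2 : ℂ) * e1 - (1 / 2 : ℂ) * e2
  rcases mul_eq_zero.mp hc with h | h
  · exact h
  · exact absurd (sub_eq_zero.mp h).symm hL

theorem stmt16 {dA dB : ℕ} (E : Matrix (Fin 2) (Fin 2) ℂ →ₗ[ℂ] Matrix (Fin 2) (Fin 2) ℂ)
    (hE : IsCPTP E)
    (l : ℝ) (hl : |l| < 1) (b : Fin 3 → ℝ)
    (hBloch : ∀ n : Fin 3 → ℝ,
      E ((1 / 2 : ℝ) • ((1 : Matrix (Fin 2) (Fin 2) ℂ) + pv n)) =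
        (1 / 2 : ℝ) • ((1 : Matrix (Fin 2) (Fin 2) ℂ) + pv (l • n + b)))
    (M : Matrix (Fin dA × Fin dB) (Fin 2) ℂ) (hM : Mᴴ * M = 1)
    (hmask : ∀ ρ : Matrix (Fin 2) (Fin 2) ℂ, ρ.PosSemidef → ρ.trace = 1 →
      ptA (M * ρ * Mᴴ) = ptA (M * E ρ * Mᴴ) ∧
      ptB (M * ρ * Mᴴ) = ptB (M * E ρ * Mᴴ)) :
    (∀ n m : Fin 3 → ℝ, (∑ i, n i ^ 2 = 1) → (∑ i, m i ^ 2 = 1) →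
      ptA (M * ((1 / 2 : ℝ) • ((1 : Matrix (Fin 2) (Fin 2) ℂ) + pv n)) * Mᴴ) =
        ptA (M * ((1 / 2 : ℝ) • ((1 : Matrix (Fin 2) (Fin 2) ℂ) + pv m)) * Mᴴ) ∧
      ptB (M * ((1 / 2 : ℝ) • ((1 : Matrix (Fin 2) (Fin 2) ℂ) + pv n)) * Mᴴ) =
        ptB (M * ((1 / 2 : ℝ) • ((1 : Matrix (Fin 2) (Fin 2) ℂ) + pv m)) * Mᴴ)) ∧
    (b ≠ 0 → False) := by
  have hL : (l : ℂ) ≠ 1 := by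
    intro h
    rw [Complex.ofReal_eq_one] at h
    rw [h] at hl
    norm_num at hl
  -- the key consequence of masking for one positive semidefinite Bloch state
  have key : ∀ n : Fin 3 → ℝ,
      ((1 / 2 : ℝ) • ((1 : Matrix (Fin 2) (Fin 2) ℂ) + pv n)).PosSemidef →
      (ptA (M * pv n * Mᴴ) = l • ptA (M * pv n * Mᴴ) + ptA (M * pv b * Mᴴ) ∧
       ptB (M * pv n * Mᴴ) = l • ptB (M * pv n * Mᴴ) + ptB (M * pv b * Mᴴ)) := by
    intro n hpsd
    obtain ⟨h1, h2⟩ := hmask _ hpsd (rho_trace n)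
    rw [hBloch n, pv_add, pv_rsmul] at h1 h2
    simp only [Matrix.mul_smul, Matrix.smul_mul, Matrix.mul_add, Matrix.add_mul, mul_smul_comm, smul_mul_assoc, mul_add, add_mul, ptA_add, ptA_smul,
      ptB_add, ptB_smul] at h1 h2
    constructor
    · have h1' := congrArg (fun X => (2 : ℝ) • X) h1
      simp only [smul_smul] at h1'
      norm_num at h1'
      exact h1'
    · have h2' := congrArg (fun X => (2 : ℝ) • X) h2
      simp only [smul_smul] at h2'
      norm_num at h2'
      exact h2'
  -- from a state and its antipode, the partial traces of M (pv n) Mᴴ vanish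
  have main : ∀ n m : Fin 3 → ℝ, pv m = -(pv n) →
      ((1 / 2 : ℝ) • ((1 : Matrix (Fin 2) (Fin 2) ℂ) + pv n)).PosSemidef →
      ((1 / 2 : ℝ) • ((1 : Matrix (Fin 2) (Fin 2) ℂ) + pv m)).PosSemidef →
      ptA (M * pv n * Mᴴ) = 0 ∧ ptB (M * pv n * Mᴴ) = 0 := by
    intro n m hm hn' hm'
    obtain ⟨a1, b1⟩ := key n hn'
    obtain ⟨a2, b2⟩ := key m hm'
    rw [hm] at a2 b2
    simp only [Matrix.mul_neg, Matrix.neg_mul, mul_neg, neg_mul, ptA_neg, ptB_neg, smul_neg] at a2 b2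
    constructor
    · ext i j
      have e1 := congrFun (congrFun a1 i) j
      have e2 := congrFun (congrFun a2 i) j
      simp only [Matrix.add_apply, Matrix.smul_apply, Matrix.neg_apply,
        Complex.real_smul] at e1 e2
      simpa using cancel_lemma (l : ℂ) _ _ hL e1 e2
    · ext i j
      have e1 := congrFun (congrFun b1 i) j
      have e2 := congrFun (congrFun b2 i) j
      simp only [Matrix.add_apply, Matrix.smul_apply, Matrix.neg_apply,
        Complex.real_smul] at e1 e2
      simpa using cancel_lemma (l : ℂ) _ _ hL e1 e2
  obtain ⟨hAx, hBx⟩ := main ![1, 0, 0] ![-1, 0, 0] (by rw [pv_x, pv_mx]) psd_x psd_mx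
  obtain ⟨hAy, hBy⟩ := main ![0, 1, 0] ![0, -1, 0] (by rw [pv_y, pv_my]) psd_y psd_my
  obtain ⟨hAz, hBz⟩ := main ![0, 0, 1] ![0, 0, -1] (by rw [pv_z, pv_mz]) psd_z psd_mz
  rw [pv_x] at hAx hBx
  rw [pv_y] at hAy hBy
  rw [pv_z] at hAz hBz
  have pvzeroA : ∀ n : Fin 3 → ℝ, ptA (M * pv n * Mᴴ) = 0 := by
    intro n
    simp only [pv, Matrix.mul_smul, Matrix.smul_mul, Matrix.mul_add, Matrix.add_mul, mul_add, add_mul, mul_smul_comm, smul_mul_assoc, ptA_add, ptA_smul,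
      hAx, hAy, hAz, smul_zero, add_zero]
  have pvzeroB : ∀ n : Fin 3 → ℝ, ptB (M * pv n * Mᴴ) = 0 := by
    intro n
    simp only [pv, Matrix.mul_smul, Matrix.smul_mul, Matrix.mul_add, Matrix.add_mul, mul_add, add_mul, mul_smul_comm, smul_mul_assoc, ptB_add, ptB_smul,
      hBx, hBy, hBz, smul_zero, add_zero]
  constructor
  · intro n m _ _
    constructor
    · simp only [Matrix.mul_smul, Matrix.smul_mul, Matrix.mul_add, Matrix.add_mul, mul_smul_comm, smul_mul_assoc, mul_add, add_mul, ptA_add, ptA_smul,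
        pvzeroA, add_zero]
    · simp only [Matrix.mul_smul, Matrix.smul_mul, Matrix.mul_add, Matrix.add_mul, mul_smul_comm, smul_mul_assoc, mul_add, add_mul, ptB_add, ptB_smul,
        pvzeroB, add_zero]
  -- the contradiction: no such isometry can exist at all
  intro _
  -- entries of conjugated standard matrices
  have ent00 : ∀ x y, (M * !![(1 : ℂ), 0; 0, 0] * Mᴴ) x y = M x 0 * star (M y 0) := by
    intro x y
    simp [Matrix.mul_apply, Matrix.conjTranspose_apply, Fin.sum_univ_two]
  have ent11 : ∀ x y, (M * !![(0 : ℂ), 0; 0, 1] * Mᴴ) x y = M x 1 * star (M y 1) := by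
    intro x y
    simp [Matrix.mul_apply, Matrix.conjTranspose_apply, Fin.sum_univ_two]
  have ent01 : ∀ x y, (M * !![(0 : ℂ), 1; 0, 0] * Mᴴ) x y = M x 0 * star (M y 1) := by
    intro x y
    simp [Matrix.mul_apply, Matrix.conjTranspose_apply, Fin.sum_univ_two]
  -- |0⟩⟨1| is a combination of σx and σy, so its A-partial trace vanishes
  have hE01A : ptA (M * !![(0 : ℂ), 1; 0, 0] * Mᴴ) = 0 := by
    have hco : (!![(0 : ℂ), 1; 0, 0] : Matrix (Fin 2) (Fin 2) ℂ) =
        (1 / 2 : ℂ) • σx + (Complex.I / 2) • σy := by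
      ext i j
      fin_cases i <;> fin_cases j <;>
        simp [σx, σy] <;> norm_num [Complex.ext_iff]
    rw [hco]
    simp only [Matrix.mul_smul, Matrix.smul_mul, Matrix.mul_add, Matrix.add_mul, ptA_add, ptA_smul,
      hAx, hAy, smul_zero, add_zero]
  -- |0⟩⟨0| and |1⟩⟨1| have equal B-partial traces
  have hB0011 : ptB (M * !![(1 : ℂ), 0; 0, 0] * Mᴴ) = ptB (M * !![(0 : ℂ), 0; 0, 1] * Mᴴ) := by
    have hco : (!![(1 : ℂ), 0; 0, 0] : Matrix (Fin 2) (Fin 2) ℂ) = !![(0 : ℂ), 0; 0, 1] + σz := by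
      ext i j
      fin_cases i <;> fin_cases j <;> simp [σz]
    rw [hco]
    simp only [Matrix.mul_add, Matrix.add_mul, ptB_add, hBz, add_zero]
  set V0 : Matrix (Fin dA) (Fin dB) ℂ := Matrix.of (fun a c => M (a, c) 0) with hV0
  set V1 : Matrix (Fin dA) (Fin dB) ℂ := Matrix.of (fun a c => M (a, c) 1) with hV1
  have hP0 : ptB (M * !![(1 : ℂ), 0; 0, 0] * Mᴴ) = V0 * V0ᴴ := by
    ext i j
    simp [ptB, ent00, Matrix.mul_apply, Matrix.conjTranspose_apply, hV0]
  have hP1 : ptB (M * !![(1 : ℂ), 0; 0, 0] * Mᴴ) = V1 * V1ᴴ := by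
    rw [hB0011]
    ext i j
    simp [ptB, ent11, Matrix.mul_apply, Matrix.conjTranspose_apply, hV1]
  have hVV : V1ᴴ * V0 = 0 := by
    ext k m
    have h := congrFun (congrFun hE01A m) k
    simp only [ptA, ent01, Matrix.zero_apply] at h
    simp only [Matrix.mul_apply, Matrix.conjTranspose_apply, hV0, hV1, Matrix.of_apply,
      Matrix.zero_apply]
    rw [← h]
    exact Finset.sum_congr rfl fun a _ => mul_comm _ _
  have hPP : ptB (M * !![(1 : ℂ), 0; 0, 0] * Mᴴ) * ptB (M * !![(1 : ℂ), 0; 0, 0] * Mᴴ) = 0 := by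
    nth_rewrite 1 [hP1]
    rw [hP0, Matrix.mul_assoc, ← Matrix.mul_assoc V1ᴴ, hVV, Matrix.zero_mul, Matrix.mul_zero]
  have hHerm : (ptB (M * !![(1 : ℂ), 0; 0, 0] * Mᴴ))ᴴ = ptB (M * !![(1 : ℂ), 0; 0, 0] * Mᴴ) := by
    rw [hP0, Matrix.conjTranspose_mul, Matrix.conjTranspose_conjTranspose]
  have hPzero : ptB (M * !![(1 : ℂ), 0; 0, 0] * Mᴴ) = 0 := by
    apply Matrix.conjTranspose_mul_self_eq_zero.mp
    rw [hHerm, hPP]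
  have htr : (ptB (M * !![(1 : ℂ), 0; 0, 0] * Mᴴ)).trace = 1 := by
    have h00 := congrFun (congrFun hM 0) 0
    simp only [Matrix.mul_apply, Matrix.conjTranspose_apply, Matrix.one_apply_eq] at h00
    rw [Matrix.trace]
    simp only [Matrix.diag, ptB, ent00]
    rw [Fintype.sum_prod_type] at h00
    rw [← h00]
    exact Finset.sum_congr rfl fun i _ => Finset.sum_congr rfl fun k _ => mul_comm _ _
  rw [hPzero] at htr
  simp at htr
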